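/- Let (H, T) be a Hilbert module over the disc algebra, X : H → H²(E) a bounded operator with Xh = Σ_{n≥0} zⁿ Xₙ h, c > 0 and L ∈ B(H, E). Then there exists a bounded operator Λ : H → H²(E) satisfying X = S_E*Λ − ΛT, P_E Λ = −L, and ‖Λh‖² ≤ ‖Lh‖² + c‖h‖² for all h ∈ H, if and only if Σ_{n=1}^∞ ‖(Σ_{j=0}^{n-1} X_{n-1-j} T^j − L Tⁿ) h‖² ≤ c‖h‖² for all h ∈ H. -/

import Mathlib

open scoped ENNReal
open Metric

noncomputable section

/-- The vector-valued Hardy space `H²(E)`, realized as the space of square-summable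
sequences of Taylor coefficients. -/
abbrev HardySpace (E : Type*) [NormedAddCommGroup E] [InnerProductSpace ℂ E] :=
  lp (fun _ : ℕ => E) 2

/-- The sup norm of a polynomial over the open unit disc. -/
noncomputable def discSupNorm (φ : Polynomial ℂ) : ℝ :=
  ⨆ z : ball (0 : ℂ) 1, ‖φ.eval (z : ℂ)‖

/-!
Coordinatewise, `X = S_E^* Λ − Λ T` says `(Λh)ₙ₊₁ = Xₙ h + (Λ(Th))ₙ`. With `(Λh)₀ = −Lh` this
recursion determines every Taylor coefficient of `Λ`, and unwinding it gives
`(Λh)ₙ₊₁ = (Σ_{j≤n} X_{n−j} T^j − L T^{n+1}) h`. Hence `‖Λh‖² − ‖Lh‖²` is exactly the series of the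
statement, so the norm bound on `Λ` is the bound on the series. Conversely, when these series
converge the coefficients define `Λh ∈ H²(E)` for every `h`, and the closed graph theorem makes `Λ`
bounded.
-/

namespace lp

variable {ι : Type*} {G : ι → Type*} [∀ i, NormedAddCommGroup (G i)]

theorem hasSum_norm_sq (f : lp G 2) : HasSum (fun i => ‖f i‖ ^ 2) (‖f‖ ^ 2) := by
  simpa [Real.rpow_two] using hasSum_norm (p := 2) (by norm_num) f

theorem hasSum_norm_sq_succ {G : ℕ → Type*} [∀ n, NormedAddCommGroup (G n)] (f : lp G 2) :
    HasSum (fun n => ‖f (n + 1)‖ ^ 2) (‖f‖ ^ 2 - ‖f 0‖ ^ 2) := by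
  simpa using (hasSum_nat_add_iff' 1).2 (hasSum_norm_sq f)

variable {𝕜 H : Type*} [NontriviallyNormedField 𝕜] [∀ i, NormedSpace 𝕜 (G i)]
  [∀ i, CompleteSpace (G i)] [NormedAddCommGroup H] [NormedSpace 𝕜 H] [CompleteSpace H]
  {p : ℝ≥0∞} [Fact (1 ≤ p)]

theorem exists_continuousLinearMap_apply_eq (A : ∀ i, H →L[𝕜] G i)
    (hA : ∀ h, Memℓp (fun i => A i h) p) : ∃ Λ : H →L[𝕜] lp G p, ∀ h i, Λ h i = A i h := by
  let Λ : H →ₗ[𝕜] lp G p :=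
    { toFun := fun h => ⟨fun i => A i h, hA h⟩
      map_add' := fun x y => lp.ext <| funext fun i => map_add (A i) x y
      map_smul' := fun a x => lp.ext <| funext fun i => map_smul (A i) a x }
  refine ⟨⟨Λ, Λ.continuous_of_seq_closed_graph fun u x y hu hy => ?_⟩, fun h i => rfl⟩
  refine lp.ext <| funext fun i => tendsto_nhds_unique ?_ (((A i).continuous.tendsto x).comp hu)
  exact ((evalCLM 𝕜 G p i).continuous.tendsto y).comp hy

end lp

section Shift

variable {𝕜 E : Type*} [RCLike 𝕜] [NormedAddCommGroup E] [InnerProductSpace 𝕜 E] [CompleteSpace E]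

theorem adjoint_shift_apply (S : lp (fun _ : ℕ => E) 2 →L[𝕜] lp (fun _ : ℕ => E) 2)
    (hS : ∀ f n, S f n = if n = 0 then 0 else f (n - 1)) (g : lp (fun _ : ℕ => E) 2) (n : ℕ) :
    (S.adjoint g) n = g (n + 1) := by
  refine ext_inner_left 𝕜 fun e => ?_
  have hsingle : S (lp.single 2 n e) = lp.single 2 (n + 1) e := by
    ext m
    rw [hS]
    rcases m with _ | m <;> simp [lp.single_apply, Pi.single_apply]
  calc inner 𝕜 e (S.adjoint g n) = inner 𝕜 (lp.single 2 n e) (S.adjoint g) :=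
        (lp.inner_single_left (G := fun _ : ℕ => E) n e _).symm
    _ = inner 𝕜 (lp.single 2 (n + 1) e) g := by rw [S.adjoint_inner_right, hsingle]
    _ = inner 𝕜 e (g (n + 1)) := lp.inner_single_left (G := fun _ : ℕ => E) _ e g

end Shift

theorem ENNReal.tsum_ofReal_le_ofReal_iff {ι : Type*} {f : ι → ℝ} (hf : ∀ i, 0 ≤ f i) {a : ℝ}
    (ha : 0 ≤ a) : ∑' i, ENNReal.ofReal (f i) ≤ ENNReal.ofReal a ↔ Summable f ∧ ∑' i, f i ≤ a := by
  constructor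
  · intro hle
    have hs : Summable f := by
      simpa [ENNReal.toReal_ofReal (hf _)] using
        ENNReal.summable_toReal (hle.trans_lt ENNReal.ofReal_lt_top).ne
    rw [← ENNReal.ofReal_tsum_of_nonneg hf hs, ENNReal.ofReal_le_ofReal_iff ha] at hle
    exact ⟨hs, hle⟩
  · rintro ⟨hs, hle⟩
    rw [← ENNReal.ofReal_tsum_of_nonneg hf hs]
    exact ENNReal.ofReal_le_ofReal hle

theorem tsum_nnnorm_sq_le_ofReal_iff {ι E : Type*} [SeminormedAddCommGroup E] {g : ι → E} {a : ℝ}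
    (ha : 0 ≤ a) :
    ∑' i, (‖g i‖₊ : ℝ≥0∞) ^ 2 ≤ ENNReal.ofReal a ↔
      Summable (fun i => ‖g i‖ ^ 2) ∧ ∑' i, ‖g i‖ ^ 2 ≤ a := by
  simp only [← ENNReal.tsum_ofReal_le_ofReal_iff (fun _ => sq_nonneg _) ha,
    ENNReal.ofReal_pow (norm_nonneg _), ofReal_norm, enorm_eq_nnnorm]

section

variable {𝕜 H E : Type*} [NormedField 𝕜] [NormedAddCommGroup H] [NormedSpace 𝕜 H]
  [NormedAddCommGroup E] [NormedSpace 𝕜 E] (T : H →L[𝕜] H) (Xf : ℕ → H →L[𝕜] E) (L : H →L[𝕜] E)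

def intertwinerCoeff : ℕ → H →L[𝕜] E
  | 0 => -L
  | n + 1 => Xf n + (intertwinerCoeff n).comp T

theorem intertwinerCoeff_succ_apply (m : ℕ) (h : H) :
    intertwinerCoeff T Xf L (m + 1) h =
      (∑ j ∈ Finset.range (m + 1), Xf (m - j) ((T ^ j) h)) - L ((T ^ (m + 1)) h) := by
  induction m generalizing h with
  | zero => simp [intertwinerCoeff, sub_eq_add_neg]
  | succ m ih =>
    rw [intertwinerCoeff, add_apply, ContinuousLinearMap.comp_apply, ih,
      Finset.sum_range_succ' _ (m + 1)]
    simp only [pow_succ, mul_apply_eq_comp, Nat.add_sub_add_right, Nat.sub_zero, pow_zero,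
      one_apply_eq_self]
    abel

theorem hasSum_norm_sq_intertwinerCoeff_succ {Λ : H →L[𝕜] lp (fun _ : ℕ => E) 2}
    (hΛ : ∀ h n, Λ h n = intertwinerCoeff T Xf L n h) (h : H) :
    HasSum (fun n => ‖intertwinerCoeff T Xf L (n + 1) h‖ ^ 2) (‖Λ h‖ ^ 2 - ‖L h‖ ^ 2) := by
  simpa [hΛ, intertwinerCoeff] using lp.hasSum_norm_sq_succ (Λ h)

end

section

variable {𝕜 H E : Type*} [RCLike 𝕜] [NormedAddCommGroup H] [NormedSpace 𝕜 H]
  [NormedAddCommGroup E] [InnerProductSpace 𝕜 E] [CompleteSpace E]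
  {T : H →L[𝕜] H} {Xf : ℕ → H →L[𝕜] E} {L : H →L[𝕜] E}

theorem eq_adjoint_comp_sub_comp_and_apply_zero_iff
    {S : lp (fun _ : ℕ => E) 2 →L[𝕜] lp (fun _ : ℕ => E) 2}
    (hS : ∀ f n, S f n = if n = 0 then 0 else f (n - 1)) {X : H →L[𝕜] lp (fun _ : ℕ => E) 2}
    (hX : ∀ h n, X h n = Xf n h) (Λ : H →L[𝕜] lp (fun _ : ℕ => E) 2) :
    (X = S.adjoint.comp Λ - Λ.comp T ∧ ∀ h, Λ h 0 = -(L h)) ↔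
      ∀ h n, Λ h n = intertwinerCoeff T Xf L n h := by
  have hrec : X = S.adjoint.comp Λ - Λ.comp T ↔ ∀ h n, Λ h (n + 1) = Xf n h + Λ (T h) n := by
    simp only [ContinuousLinearMap.ext_iff, lp.ext_iff, funext_iff, sub_apply,
      ContinuousLinearMap.comp_apply, lp.coeFn_sub, Pi.sub_apply, adjoint_shift_apply S hS, hX]
    exact forall₂_congr fun h n => by rw [eq_comm, sub_eq_iff_eq_add]
  rw [hrec]
  constructor
  · rintro ⟨hsucc, hzero⟩ h n
    induction n generalizing h with
    | zero => exact hzero h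
    | succ n ih => rw [hsucc, ih]; rfl
  · intro hΛ
    exact ⟨fun h n => by simp only [hΛ]; rfl, fun h => hΛ h 0⟩

end

theorem innerchar {H E : Type*}
    [NormedAddCommGroup H] [InnerProductSpace ℂ H] [CompleteSpace H]
    [NormedAddCommGroup E] [InnerProductSpace ℂ E] [CompleteSpace E]
    (T : H →L[ℂ] H)
    (X : H →L[ℂ] HardySpace E) (Xf : ℕ → H →L[ℂ] E)
    (hX : ∀ (h : H) (n : ℕ), (X h) n = Xf n h)
    (c : ℝ) (hc : 0 < c) (L : H →L[ℂ] E)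
    (SE : HardySpace E →L[ℂ] HardySpace E)
    (hSE : ∀ (f : HardySpace E) (n : ℕ), (SE f) n = if n = 0 then 0 else f (n - 1)) :
    (∃ Λ : H →L[ℂ] HardySpace E,
        X = (ContinuousLinearMap.adjoint SE).comp Λ - Λ.comp T ∧
        (∀ h : H, (Λ h) 0 = -(L h)) ∧
        ∀ h : H, ‖Λ h‖ ^ 2 ≤ ‖L h‖ ^ 2 + c * ‖h‖ ^ 2) ↔
      ∀ h : H,
        ∑' m : ℕ,
            (‖(∑ j ∈ Finset.range (m + 1), Xf (m - j) ((T ^ j) h)) - L ((T ^ (m + 1)) h)‖₊ :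
              ℝ≥0∞) ^ 2 ≤
          ENNReal.ofReal (c * ‖h‖ ^ 2) := by
  have hbound_nonneg (h : H) : 0 ≤ c * ‖h‖ ^ 2 := by positivity
  simp only [← intertwinerCoeff_succ_apply, tsum_nnnorm_sq_le_ofReal_iff (hbound_nonneg _)]
  constructor
  · rintro ⟨Λ, hΛX, hΛ0, hΛnorm⟩ h
    have hsum := hasSum_norm_sq_intertwinerCoeff_succ T Xf L
      ((eq_adjoint_comp_sub_comp_and_apply_zero_iff hSE hX Λ).1 ⟨hΛX, hΛ0⟩) h
    exact ⟨hsum.summable, by linarith [hsum.tsum_eq, hΛnorm h]⟩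
  · intro hsum
    have hmem (h : H) : Memℓp (fun n => intertwinerCoeff T Xf L n h) 2 := by
      refine memℓp_gen ?_
      simpa [Real.rpow_two] using
        (summable_nat_add_iff (f := fun n => ‖intertwinerCoeff T Xf L n h‖ ^ 2) 1).1 (hsum h).1
    obtain ⟨Λ, hΛ⟩ := lp.exists_continuousLinearMap_apply_eq _ hmem
    obtain ⟨hΛX, hΛ0⟩ := (eq_adjoint_comp_sub_comp_and_apply_zero_iff hSE hX Λ).2 hΛ
    refine ⟨Λ, hΛX, hΛ0, fun h => ?_⟩
    linarith [(hasSum_norm_sq_intertwinerCoeff_succ T Xf L hΛ h).tsum_eq, (hsum h).2]
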